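/- arXiv:math/0610734 — 2 statements merged into one kernel-verified Lean document; each statement's English description precedes it below -/
import Mathlib

section
/- Let F_2(z) be the generating function of basketball walks of width 2: walks with steps (1,1),(1,-1),(2,2),(2,-2) from (0,0) to (2n,0) confined to 0 ≤ y ≤ 2, weighted z^n. Then F_2(z) = (1-z)/(1-2z-3z²) as formal power series, i.e. (1-2z-3z²)·F_2 = 1-z. -/
open PowerSeries

/-- Heights visited by a walk starting at height `i` with the given steps
(second coordinate is the vertical displacement of a step). -/
def heights (i : ℤ) (l : List (ℤ × ℤ)) : List ℤ :=
  l.scanl (fun h st => h + st.2) i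

/-- `IsWalk S w i j l` : `l` is a walk with steps from `S`, starting at height `i`,
ending at height `j`, with all visited heights in the strip `0 ≤ y ≤ w`. -/
def IsWalk (S : Set (ℤ × ℤ)) (w i j : ℤ) (l : List (ℤ × ℤ)) : Prop :=
  (∀ st ∈ l, st ∈ S) ∧ (∀ h ∈ heights i l, 0 ≤ h ∧ h ≤ w) ∧
    i + (l.map Prod.snd).sum = j

/-- Number of walks with steps in `S`, width `w`, from height `i` to height `j`,
with total horizontal displacement `L`. -/
noncomputable def walkCount (S : Set (ℤ × ℤ)) (w i j L : ℤ) : ℕ :=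
  Set.ncard {l : List (ℤ × ℤ) | IsWalk S w i j l ∧ (l.map Prod.fst).sum = L}

def dyckSteps : Set (ℤ × ℤ) := {(1, 1), (1, -1)}

def bballSteps : Set (ℤ × ℤ) := {(1, 1), (1, -1), (2, 2), (2, -2)}

noncomputable def F (w : ℕ) : PowerSeries ℚ :=
  PowerSeries.mk fun n => (walkCount bballSteps w 0 0 (2 * n) : ℚ)

/-! ### Auxiliary lemmas -/

lemma heights_nil (i : ℤ) : heights i [] = [i] := rfl

lemma heights_cons (i : ℤ) (st : ℤ × ℤ) (l : List (ℤ × ℤ)) :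
    heights i (st :: l) = i :: heights (i + st.2) l := by simp only [heights, List.scanl_cons]

lemma isWalk_nil (S : Set (ℤ × ℤ)) (w i j : ℤ) :
    IsWalk S w i j [] ↔ (0 ≤ i ∧ i ≤ w) ∧ i = j := by
  simp [IsWalk, heights_nil]

lemma isWalk_cons (S : Set (ℤ × ℤ)) (w i j : ℤ) (st : ℤ × ℤ) (l : List (ℤ × ℤ)) :
    IsWalk S w i j (st :: l) ↔
      st ∈ S ∧ (0 ≤ i ∧ i ≤ w) ∧ IsWalk S w (i + st.2) j l := by
  simp only [IsWalk, heights_cons, List.mem_cons, List.map_cons, List.sum_cons]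
  constructor
  · rintro ⟨h1, h2, h3⟩
    refine ⟨h1 st (Or.inl rfl), h2 i (Or.inl rfl), fun x hx => h1 x (Or.inr hx),
      fun h hh => h2 h (Or.inr hh), by linarith⟩
  · rintro ⟨h1, h2, h3, h4, h5⟩
    exact ⟨fun x hx => hx.elim (fun e => e ▸ h1) (h3 x),
      fun h hh => hh.elim (fun e => e ▸ h2) (h4 h), by linarith⟩

/-- The set of basketball walks of width 2 from `i` to `j` with horizontal length `L`. -/
def WSet (i j L : ℤ) : Set (List (ℤ × ℤ)) :=
  {l | IsWalk bballSteps 2 i j l ∧ (l.map Prod.fst).sum = L}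

lemma walkCount_eq (i j L : ℤ) : walkCount bballSteps 2 i j L = (WSet i j L).ncard := rfl

lemma bball_finite : bballSteps.Finite := by
  simp only [bballSteps]
  exact (Set.finite_singleton _).insert _ |>.insert _ |>.insert _

lemma length_le_sum_fst (l : List (ℤ × ℤ)) (h : ∀ st ∈ l, st ∈ bballSteps) :
    (l.length : ℤ) ≤ (l.map Prod.fst).sum := by
  induction l with
  | nil => simp
  | cons st t ih =>
    have hst : st ∈ bballSteps := h st (List.mem_cons_self)
    have h1 : (1 : ℤ) ≤ st.1 := by
      simp only [bballSteps, Set.mem_insert_iff, Set.mem_singleton_iff] at hst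
      rcases hst with h | h | h | h <;> simp [h]
    have := ih (fun x hx => h x (List.mem_cons_of_mem _ hx))
    simp only [List.length_cons, List.map_cons, List.sum_cons]
    push_cast
    linarith

lemma WSet_finite (i j L : ℤ) : (WSet i j L).Finite := by
  have : Finite ↥bballSteps := bball_finite.to_subtype
  have key : WSet i j L ⊆
      (fun l : List ↥bballSteps => l.map Subtype.val) ''
        {l : List ↥bballSteps | l.length ≤ L.toNat} := by
    rintro l ⟨⟨hS, -, -⟩, hsum⟩
    refine ⟨l.attach.map (fun x => ⟨x.1, hS x.1 x.2⟩), ?_, ?_⟩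
    · simp only [Set.mem_setOf_eq, List.length_map, List.length_attach]
      have hlen := length_le_sum_fst l hS
      omega
    · simp [List.map_map, Function.comp_def, List.attach_map_subtype_val]
  exact ((List.finite_length_le _ _).image _).subset key

lemma start_mem_heights (i : ℤ) (l : List (ℤ × ℤ)) : i ∈ heights i l := by
  cases l with
  | nil => simp [heights]
  | cons st t => rw [heights_cons]; exact List.mem_cons_self

lemma WSet_out (i j L : ℤ) (h : i < 0 ∨ 2 < i) : WSet i j L = ∅ := by
  ext l
  simp only [WSet, Set.mem_setOf_eq, Set.mem_empty_iff_false, iff_false]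
  rintro ⟨⟨-, hh, -⟩, -⟩
  have := hh i (start_mem_heights i l)
  omega

lemma WSet_zero (i j : ℤ) : WSet i j 0 = if i = j ∧ 0 ≤ i ∧ i ≤ 2 then {[]} else ∅ := by
  ext l
  simp only [WSet, Set.mem_setOf_eq]
  constructor
  · rintro ⟨hw, hsum⟩
    have hnil : l = [] := by
      have h1 := length_le_sum_fst l hw.1
      rw [hsum] at h1
      have : l.length = 0 := by omega
      exact List.length_eq_zero_iff.mp this
    subst hnil
    rw [isWalk_nil] at hw
    simp [hw.2, hw.1.1, hw.1.2, if_pos]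
    exact ⟨hw.2 ▸ hw.1.1, hw.2 ▸ hw.1.2⟩
  · intro hl
    split_ifs at hl with hc
    · simp only [Set.mem_singleton_iff] at hl
      subst hl
      exact ⟨(isWalk_nil _ _ _ _).mpr ⟨⟨hc.2.1, hc.2.2⟩, hc.1⟩, by simp⟩
    · exact absurd hl (Set.notMem_empty l)

lemma WSet_head (st : ℤ × ℤ) (hst : st ∈ bballSteps) (i j L : ℤ) (hi0 : 0 ≤ i) (hi2 : i ≤ 2) :
    {l | l ∈ WSet i j L ∧ l.head? = some st} = (List.cons st) '' WSet (i + st.2) j (L - st.1) := by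
  ext l
  simp only [Set.mem_setOf_eq, Set.mem_image]
  constructor
  · rintro ⟨⟨hw, hsum⟩, hhd⟩
    cases l with
    | nil => simp at hhd
    | cons a t =>
      simp only [List.head?_cons, Option.some.injEq] at hhd
      subst hhd
      rw [isWalk_cons] at hw
      refine ⟨t, ⟨hw.2.2, ?_⟩, rfl⟩
      simp only [List.map_cons, List.sum_cons] at hsum
      linarith
  · rintro ⟨t, ⟨hw, hsum⟩, rfl⟩
    refine ⟨⟨(isWalk_cons _ _ _ _ _ _).mpr ⟨hst, ⟨hi0, hi2⟩, hw⟩, ?_⟩, rfl⟩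
    simp only [List.map_cons, List.sum_cons]
    linarith

lemma disj_cons (s1 s2 : ℤ × ℤ) (hne : s1 ≠ s2) (W1 W2 : Set (List (ℤ × ℤ))) :
    Disjoint (List.cons s1 '' W1) (List.cons s2 '' W2) := by
  rw [Set.disjoint_left]
  rintro l ⟨t1, -, rfl⟩ ⟨t2, -, h⟩
  simp only [List.cons.injEq] at h
  exact hne (h.1.symm ▸ rfl)

lemma WSet_rec (i j L : ℤ) (hi0 : 0 ≤ i) (hi2 : i ≤ 2) (h : ¬(i = j ∧ L = 0)) :
    (WSet i j L).ncard =
      (WSet (i + 1) j (L - 1)).ncard + (WSet (i - 1) j (L - 1)).ncard +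
        (WSet (i + 2) j (L - 2)).ncard + (WSet (i - 2) j (L - 2)).ncard := by
  have m1 : ((1, 1) : ℤ × ℤ) ∈ bballSteps := by simp [bballSteps]
  have m2 : ((1, -1) : ℤ × ℤ) ∈ bballSteps := by simp [bballSteps]
  have m3 : ((2, 2) : ℤ × ℤ) ∈ bballSteps := by simp [bballSteps]
  have m4 : ((2, -2) : ℤ × ℤ) ∈ bballSteps := by simp [bballSteps]
  have e1 : {l | l ∈ WSet i j L ∧ l.head? = some (1, 1)} =
      List.cons (1, 1) '' WSet (i + 1) j (L - 1) := WSet_head _ m1 i j L hi0 hi2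
  have e2 : {l | l ∈ WSet i j L ∧ l.head? = some (1, -1)} =
      List.cons (1, -1) '' WSet (i + -1) j (L - 1) := WSet_head _ m2 i j L hi0 hi2
  have e3 : {l | l ∈ WSet i j L ∧ l.head? = some (2, 2)} =
      List.cons (2, 2) '' WSet (i + 2) j (L - 2) := WSet_head _ m3 i j L hi0 hi2
  have e4 : {l | l ∈ WSet i j L ∧ l.head? = some (2, -2)} =
      List.cons (2, -2) '' WSet (i + -2) j (L - 2) := WSet_head _ m4 i j L hi0 hi2
  have cover : WSet i j L =
      List.cons (1, 1) '' WSet (i + 1) j (L - 1) ∪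
        List.cons (1, -1) '' WSet (i + -1) j (L - 1) ∪
        List.cons (2, 2) '' WSet (i + 2) j (L - 2) ∪
        List.cons (2, -2) '' WSet (i + -2) j (L - 2) := by
    ext l
    constructor
    · intro hl
      cases l with
      | nil =>
        obtain ⟨hw, hsum⟩ := hl
        rw [isWalk_nil] at hw
        exact absurd ⟨hw.2, by simpa using hsum.symm⟩ h
      | cons st t =>
        have hst : st ∈ bballSteps := hl.1.1 st (List.mem_cons_self)
        simp only [bballSteps, Set.mem_insert_iff, Set.mem_singleton_iff] at hst
        rcases hst with rfl | rfl | rfl | rfl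
        · exact Or.inl (Or.inl (Or.inl (e1 ▸ (⟨hl, rfl⟩ : _ ∧ _))))
        · exact Or.inl (Or.inl (Or.inr (e2 ▸ (⟨hl, rfl⟩ : _ ∧ _))))
        · exact Or.inl (Or.inr (e3 ▸ (⟨hl, rfl⟩ : _ ∧ _)))
        · exact Or.inr (e4 ▸ (⟨hl, rfl⟩ : _ ∧ _))
    · rintro (((hl | hl) | hl) | hl)
      · exact (e1 ▸ hl : _ ∧ _).1
      · exact (e2 ▸ hl : _ ∧ _).1
      · exact (e3 ▸ hl : _ ∧ _).1
      · exact (e4 ▸ hl : _ ∧ _).1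
  have f1 := (WSet_finite (i + 1) j (L - 1)).image (List.cons (1, 1))
  have f2 := (WSet_finite (i + -1) j (L - 1)).image (List.cons (1, -1))
  have f3 := (WSet_finite (i + 2) j (L - 2)).image (List.cons (2, 2))
  have f4 := (WSet_finite (i + -2) j (L - 2)).image (List.cons (2, -2))
  rw [cover]
  rw [Set.ncard_union_eq (by
        refine Set.disjoint_union_left.mpr ⟨Set.disjoint_union_left.mpr ⟨?_, ?_⟩, ?_⟩ <;>
          exact disj_cons _ _ (by decide) _ _) ((f1.union f2).union f3) f4,
      Set.ncard_union_eq (by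
        refine Set.disjoint_union_left.mpr ⟨?_, ?_⟩ <;> exact disj_cons _ _ (by decide) _ _)
        (f1.union f2) f3,
      Set.ncard_union_eq (disj_cons _ _ (by decide) _ _) f1 f2]
  rw [Set.ncard_image_of_injective _ (List.cons_injective),
      Set.ncard_image_of_injective _ (List.cons_injective),
      Set.ncard_image_of_injective _ (List.cons_injective),
      Set.ncard_image_of_injective _ (List.cons_injective)]
  have h1 : i + -1 = i - 1 := by ring
  have h2 : i + -2 = i - 2 := by ring
  rw [h1, h2]

lemma u_zero : (WSet 0 0 0).ncard = 1 := by
  rw [WSet_zero]; norm_num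

lemma w_zero : (WSet 2 0 0).ncard = 0 := by
  rw [WSet_zero]; norm_num

lemma u_rec (n : ℕ) : (WSet 0 0 (2 * (n + 1 : ℕ))).ncard =
    (WSet 1 0 (2 * n + 1)).ncard + (WSet 2 0 (2 * n)).ncard := by
  have key := WSet_rec 0 0 (2 * ((n : ℤ) + 1)) le_rfl (by norm_num) (by omega)
  rw [WSet_out (0 - 1) 0 _ (by norm_num), WSet_out (0 - 2) 0 _ (by norm_num),
    Set.ncard_empty] at key
  have a0 : (2 * ((n : ℕ) + 1 : ℕ) : ℤ) = 2 * ((n : ℤ) + 1) := by push_cast; ring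
  have a1 : 2 * ((n : ℤ) + 1) - 1 = 2 * (n : ℤ) + 1 := by ring
  have a2 : 2 * ((n : ℤ) + 1) - 2 = 2 * (n : ℤ) := by ring
  rw [a0, key, a1, a2]
  norm_num

lemma v_rec (n : ℕ) : (WSet 1 0 (2 * n + 1)).ncard =
    (WSet 2 0 (2 * n)).ncard + (WSet 0 0 (2 * n)).ncard := by
  have key := WSet_rec 1 0 (2 * (n : ℤ) + 1) (by norm_num) (by norm_num) (by omega)
  rw [WSet_out (1 + 2) 0 _ (by norm_num), WSet_out (1 - 2) 0 _ (by norm_num),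
    Set.ncard_empty] at key
  have a1 : 2 * (n : ℤ) + 1 - 1 = 2 * (n : ℤ) := by ring
  rw [key, a1]
  norm_num

lemma w_rec (n : ℕ) : (WSet 2 0 (2 * (n + 1 : ℕ))).ncard =
    (WSet 1 0 (2 * n + 1)).ncard + (WSet 0 0 (2 * n)).ncard := by
  have key := WSet_rec 2 0 (2 * ((n : ℤ) + 1)) (by norm_num) le_rfl (by omega)
  rw [WSet_out (2 + 1) 0 _ (by norm_num), WSet_out (2 + 2) 0 _ (by norm_num),
    Set.ncard_empty] at key
  have a0 : (2 * ((n : ℕ) + 1 : ℕ) : ℤ) = 2 * ((n : ℤ) + 1) := by push_cast; ring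
  have a1 : 2 * ((n : ℤ) + 1) - 1 = 2 * (n : ℤ) + 1 := by ring
  have a2 : 2 * ((n : ℤ) + 1) - 2 = 2 * (n : ℤ) := by ring
  rw [a0, key, a1, a2]
  norm_num

/-- Generating function of walks of width 2 from height 1 to height 0 (odd lengths). -/
noncomputable def Vps : PowerSeries ℚ :=
  PowerSeries.mk fun n => ((WSet 1 0 (2 * n + 1)).ncard : ℚ)

/-- Generating function of walks of width 2 from height 2 to height 0 (even lengths). -/
noncomputable def Wps : PowerSeries ℚ :=
  PowerSeries.mk fun n => ((WSet 2 0 (2 * n)).ncard : ℚ)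

lemma F2_eq : F 2 = PowerSeries.mk fun n => ((WSet 0 0 (2 * n)).ncard : ℚ) := by
  ext n
  simp only [F, coeff_mk, walkCount, WSet]
  norm_num

theorem bball_width_two_gf :
    (1 - 2 * PowerSeries.X - 3 * PowerSeries.X ^ 2) * F 2 = 1 - PowerSeries.X := by
  have h1 : F 2 = 1 + X * (Vps + Wps) := by
    rw [F2_eq]
    ext n
    cases n with
    | zero =>
      rw [map_add, coeff_zero_X_mul, coeff_zero_one, coeff_mk]
      norm_num [u_zero]
    | succ n =>
      rw [map_add, coeff_succ_X_mul, map_add, coeff_one]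
      simp only [Vps, Wps, coeff_mk]
      rw [u_rec n]
      push_cast
      ring
  have h2 : Vps = F 2 + Wps := by
    rw [F2_eq]
    ext n
    rw [map_add]
    simp only [Vps, Wps, coeff_mk]
    rw [v_rec n]
    push_cast
    ring
  have h3 : Wps = X * (Vps + F 2) := by
    rw [F2_eq]
    ext n
    cases n with
    | zero =>
      simp only [Wps, coeff_zero_eq_constantCoeff, constantCoeff_mk]
      norm_num [w_zero]
    | succ n =>
      rw [coeff_succ_X_mul, map_add]
      simp only [Vps, Wps, coeff_mk]
      rw [w_rec n]
      push_cast
      ring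
  linear_combination (1 - X) * h1 + (X + X ^ 2) * h2 + (2 * X) * h3
end

section
/- For the generating functions F_w, G_w, H_w, J_w of basketball walks of width w from level i to level j (for (i,j) = (0,0),(0,1),(1,0),(1,1) respectively, in the variable s = sqrt(z) with weight s per unit horizontal distance), the following system holds for all w ≥ 1: F_w = 1 + F_w(s²F_{w-1} + s³G_{w-1} + s³H_{w-1} + s⁴J_{w-1}); G_w = F_w(s·F_{w-1} + s²H_{w-1}); H_w = F_w(s·F_{w-1} + s²G_{w-1}); J_w = F_{w-1} + G_w(s·F_{w-1} + s²G_{w-1}). -/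
open PowerSeries

/-- Generating functions in the variable `s = √z` (weight `s` per unit horizontal
distance) of basketball walks of width `w` from level `i` to level `j`. -/
noncomputable def gf (w : ℕ) (i j : ℤ) : PowerSeries ℚ :=
  PowerSeries.mk fun L => (walkCount bballSteps w i j L : ℚ)

namespace BBall

abbrev Step := ℤ × ℤ

def vsum (l : List Step) : ℤ := (l.map Prod.snd).sum
def hlen (l : List Step) : ℤ := (l.map Prod.fst).sum

@[simp] lemma vsum_nil : vsum [] = 0 := rfl
@[simp] lemma vsum_cons (s : Step) (l : List Step) : vsum (s :: l) = s.2 + vsum l := by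
  simp [vsum]
@[simp] lemma vsum_append (a b : List Step) : vsum (a ++ b) = vsum a + vsum b := by
  simp [vsum]
@[simp] lemma hlen_nil : hlen [] = 0 := rfl
@[simp] lemma hlen_cons (s : Step) (l : List Step) : hlen (s :: l) = s.1 + hlen l := by
  simp [hlen]
@[simp] lemma hlen_append (a b : List Step) : hlen (a ++ b) = hlen a + hlen b := by
  simp [hlen]

lemma heights_cons (i : ℤ) (s : Step) (l : List Step) :
    heights i (s :: l) = i :: heights (i + s.2) l := by simp [heights, List.scanl_cons]

lemma mem_heights {i h : ℤ} {l : List Step} :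
    h ∈ heights i l ↔ ∃ n, n ≤ l.length ∧ i + vsum (l.take n) = h := by
  induction l generalizing i with
  | nil => simp [heights, eq_comm]
  | cons s l ih =>
    rw [heights_cons]
    simp only [List.mem_cons, ih]
    constructor
    · rintro (rfl | ⟨n, hn, rfl⟩)
      · exact ⟨0, by simp, by simp⟩
      · exact ⟨n + 1, by simpa using hn, by simp; ring⟩
    · rintro ⟨n, hn, rfl⟩
      cases n with
      | zero => left; simp
      | succ n => right; exact ⟨n, by simpa using hn, by simp; ring⟩

lemma take_append_le {a b : List Step} {n : ℕ} (h : n ≤ a.length) :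
    (a ++ b).take n = a.take n := by
  rw [List.take_append, Nat.sub_eq_zero_of_le h, List.take_zero, List.append_nil]

lemma take_append_ge {a b : List Step} {n : ℕ} (h : a.length ≤ n) :
    (a ++ b).take n = a ++ b.take (n - a.length) := by
  rw [List.take_append, List.take_of_length_le h]

lemma mem_heights_append {i h : ℤ} {a b : List Step} :
    h ∈ heights i (a ++ b) ↔ h ∈ heights i a ∨ h ∈ heights (i + vsum a) b := by
  simp only [mem_heights]
  constructor
  · rintro ⟨n, hn, rfl⟩
    rcases le_or_gt n a.length with h1 | h1
    · left
      exact ⟨n, h1, by rw [take_append_le h1]⟩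
    · right
      refine ⟨n - a.length, ?_, ?_⟩
      · simp only [List.length_append] at hn; omega
      · rw [take_append_ge h1.le]; simp [add_assoc]
  · rintro (⟨n, hn, rfl⟩ | ⟨n, hn, rfl⟩)
    · exact ⟨n, by simp; omega, by rw [take_append_le hn]⟩
    · refine ⟨a.length + n, by simp; omega, ?_⟩
      rw [take_append_ge (by omega)]
      simp [add_assoc]

lemma isWalk_append {S : Set Step} {w i j : ℤ} {a b : List Step} :
    IsWalk S w i j (a ++ b) ↔ IsWalk S w i (i + vsum a) a ∧ IsWalk S w (i + vsum a) j b := by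
  unfold IsWalk
  constructor
  · rintro ⟨hs, hb, he⟩
    refine ⟨⟨fun st hst => hs st (by simp [hst]), fun h hh => hb h (mem_heights_append.2 (Or.inl hh)), rfl⟩,
      ⟨fun st hst => hs st (by simp [hst]), fun h hh => hb h (mem_heights_append.2 (Or.inr hh)), ?_⟩⟩
    · rw [← he]; show i + vsum a + vsum b = i + vsum (a ++ b); simp [add_assoc]
  · rintro ⟨⟨hs1, hb1, _⟩, ⟨hs2, hb2, he2⟩⟩
    refine ⟨fun st hst => (List.mem_append.1 hst).elim (hs1 st) (hs2 st),
      fun h hh => (mem_heights_append.1 hh).elim (hb1 h) (hb2 h), ?_⟩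
    show i + vsum (a ++ b) = j
    rw [vsum_append, ← add_assoc]; exact he2


def Good : Set (List Step) := {l | ∀ st ∈ l, st ∈ bballSteps}

lemma step_fst_pos {st : Step} (h : st ∈ bballSteps) : 1 ≤ st.1 := by
  simp only [bballSteps, Set.mem_insert_iff, Set.mem_singleton_iff] at h
  rcases h with rfl | rfl | rfl | rfl <;> norm_num

lemma length_le_hlen {l : List Step} (h : l ∈ Good) : (l.length : ℤ) ≤ hlen l := by
  induction l with
  | nil => simp
  | cons s t ih =>
    have h1 := step_fst_pos (h s List.mem_cons_self)
    have h2 := ih (fun st hst => h st (List.mem_cons_of_mem s hst))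
    simp only [hlen_cons, List.length_cons]
    push_cast
    omega

lemma hlen_nonneg {l : List Step} (h : l ∈ Good) : 0 ≤ hlen l := by
  have := length_le_hlen h
  have : (0 : ℤ) ≤ l.length := Int.ofNat_nonneg _
  omega

lemma bballSteps_finite : bballSteps.Finite := by
  unfold bballSteps
  exact (((Set.finite_singleton _).insert _).insert _).insert _

lemma finite_slice {A : Set (List Step)} (hA : A ⊆ Good) (n : ℕ) :
    {l | l ∈ A ∧ hlen l = (n : ℤ)}.Finite := by
  haveI := bballSteps_finite.to_subtype
  have h1 : {l : List bballSteps | l.length ≤ n}.Finite := List.finite_length_le _ n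
  refine (h1.image (fun l => l.map Subtype.val)).subset ?_
  rintro l ⟨hlA, hln⟩
  have hg := hA hlA
  refine ⟨l.attach.map (fun x => (⟨x.1, hg x.1 x.2⟩ : bballSteps)), ?_, ?_⟩
  · simp only [Set.mem_setOf_eq, List.length_map, List.length_attach]
    have := length_le_hlen hg
    omega
  · simp only [List.map_map]
    rw [show (Subtype.val ∘ fun x : {x // x ∈ l} => (⟨↑x, hg x.1 x.2⟩ : bballSteps)) =
      (fun x : {x // x ∈ l} => x.1) from rfl]
    exact List.attach_map_subtype_val l

noncomputable def cnt (A : Set (List Step)) (n : ℕ) : ℕ :=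
  Set.ncard {l | l ∈ A ∧ hlen l = (n : ℤ)}

noncomputable def gfS (A : Set (List Step)) : PowerSeries ℚ :=
  PowerSeries.mk fun n => (cnt A n : ℚ)

lemma gf_eq_gfS (w : ℕ) (i j : ℤ) : gf w i j = gfS {l | IsWalk bballSteps w i j l} := rfl

lemma gfS_union {A B : Set (List Step)} (hA : A ⊆ Good) (hB : B ⊆ Good) (hd : Disjoint A B) :
    gfS (A ∪ B) = gfS A + gfS B := by
  ext n
  simp only [gfS, coeff_mk, map_add]
  rw [← Nat.cast_add]
  congr 1
  unfold cnt
  have hs : {l | l ∈ A ∪ B ∧ hlen l = (n : ℤ)} =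
      {l | l ∈ A ∧ hlen l = (n : ℤ)} ∪ {l | l ∈ B ∧ hlen l = (n : ℤ)} := by
    ext l; simp only [Set.mem_union, Set.mem_setOf_eq]; tauto
  rw [hs, Set.ncard_union_eq (hd.mono (fun l hl => hl.1) (fun l hl => hl.1))
    (finite_slice hA n) (finite_slice hB n)]

lemma cnt_singleton (l0 : List Step) (n : ℕ) :
    cnt {l0} n = if (n : ℤ) = hlen l0 then 1 else 0 := by
  unfold cnt
  by_cases h : (n : ℤ) = hlen l0
  · rw [if_pos h]
    have hs : {l | l ∈ ({l0} : Set (List Step)) ∧ hlen l = (n : ℤ)} = {l0} := by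
      ext l
      simp only [Set.mem_setOf_eq, Set.mem_singleton_iff, and_iff_left_iff_imp]
      rintro rfl
      exact h.symm
    rw [hs, Set.ncard_singleton]
  · rw [if_neg h]
    have hs : {l | l ∈ ({l0} : Set (List Step)) ∧ hlen l = (n : ℤ)} = (∅ : Set (List Step)) := by
      ext l
      simp only [Set.mem_setOf_eq, Set.mem_singleton_iff, Set.mem_empty_iff_false, iff_false,
        not_and]
      rintro rfl
      exact fun hc => h hc.symm
    rw [hs, Set.ncard_empty]

lemma gfS_nil : gfS {([] : List Step)} = 1 := by
  ext n
  simp only [gfS, coeff_mk, coeff_one, cnt_singleton, hlen_nil]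
  by_cases h : n = 0 <;> simp [h]

lemma gfS_single {c : Step} {k : ℕ} (hk : c.1 = (k : ℤ)) :
    gfS {[c]} = (X : PowerSeries ℚ) ^ k := by
  ext n
  simp only [gfS, coeff_mk, coeff_X_pow, cnt_singleton, hlen_cons, hlen_nil, add_zero, hk]
  by_cases h : n = k
  · simp [h]
  · rw [if_neg (by exact_mod_cast h), if_neg h]
    simp

lemma ncard_prod {α β : Type*} (s : Set α) (t : Set β) (hs : s.Finite) (ht : t.Finite) :
    (s ×ˢ t).ncard = s.ncard * t.ncard := by
  rw [Set.ncard_eq_toFinset_card _ (hs.prod ht), Set.ncard_eq_toFinset_card _ hs,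
    Set.ncard_eq_toFinset_card _ ht, ← Finset.card_product]
  congr 1
  ext p
  simp

lemma ncard_biUnion {ι : Type*} (t : Finset ι) (f : ι → Set (List Step))
    (hfin : ∀ i ∈ t, (f i).Finite)
    (hdisj : ∀ i ∈ t, ∀ j ∈ t, i ≠ j → Disjoint (f i) (f j)) :
    (⋃ i ∈ t, f i).ncard = ∑ i ∈ t, (f i).ncard := by
  classical
  induction t using Finset.induction with
  | empty => simp
  | @insert a s hx ih =>
    rw [Finset.sum_insert hx]
    have hset : (⋃ i ∈ insert a s, f i) = f a ∪ ⋃ i ∈ s, f i := by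
      simp [Set.biUnion_insert]
    rw [hset, Set.ncard_union_eq ?_ (hfin a (Finset.mem_insert_self a s)) ?_,
      ih (fun i hi => hfin i (Finset.mem_insert_of_mem hi))
        (fun i hi j hj hij => hdisj i (Finset.mem_insert_of_mem hi) j
          (Finset.mem_insert_of_mem hj) hij)]
    · simp only [Set.disjoint_iUnion_right]
      intro i hi
      exact hdisj a (Finset.mem_insert_self a s) i (Finset.mem_insert_of_mem hi)
        (fun h => hx (h ▸ hi))
    · exact Set.Finite.biUnion s.finite_toSet
        (fun i hi => hfin i (Finset.mem_insert_of_mem hi))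

lemma gfS_mul {A B : Set (List Step)} (hA : A ⊆ Good) (hB : B ⊆ Good)
    (huniq : ∀ a ∈ A, ∀ b ∈ B, ∀ a' ∈ A, ∀ b' ∈ B, a ++ b = a' ++ b' → a = a' ∧ b = b') :
    gfS {l | ∃ a ∈ A, ∃ b ∈ B, a ++ b = l} = gfS A * gfS B := by
  have key : ∀ n : ℕ, cnt {l | ∃ a ∈ A, ∃ b ∈ B, a ++ b = l} n =
      ∑ p ∈ Finset.HasAntidiagonal.antidiagonal n, cnt A p.1 * cnt B p.2 := by
    intro n
    unfold cnt
    have hset : {l | l ∈ {l | ∃ a ∈ A, ∃ b ∈ B, a ++ b = l} ∧ hlen l = (n : ℤ)} =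
        ⋃ p ∈ Finset.HasAntidiagonal.antidiagonal n,
          (fun q : List Step × List Step => q.1 ++ q.2) ''
            ({l | l ∈ A ∧ hlen l = (p.1 : ℤ)} ×ˢ {l | l ∈ B ∧ hlen l = (p.2 : ℤ)}) := by
      ext l
      simp only [Set.mem_setOf_eq, Set.mem_iUnion, Set.mem_image, Set.mem_prod,
        Finset.HasAntidiagonal.mem_antidiagonal]
      constructor
      · rintro ⟨⟨a, ha, b, hb, rfl⟩, hl⟩
        have ha0 : 0 ≤ hlen a := hlen_nonneg (hA ha)
        have hb0 : 0 ≤ hlen b := hlen_nonneg (hB hb)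
        rw [hlen_append] at hl
        refine ⟨((hlen a).toNat, (hlen b).toNat), by omega, (a, b),
          ⟨⟨ha, (Int.toNat_of_nonneg ha0).symm⟩, hb, (Int.toNat_of_nonneg hb0).symm⟩, rfl⟩
      · rintro ⟨p, hp, ⟨a, b⟩, ⟨⟨ha, hha⟩, hb, hhb⟩, rfl⟩
        refine ⟨⟨a, ha, b, hb, rfl⟩, ?_⟩
        rw [hlen_append, hha, hhb, ← hp]
        push_cast
        ring
    rw [hset, ncard_biUnion]
    · refine Finset.sum_congr rfl (fun p _ => ?_)
      rw [Set.ncard_image_of_injOn, ncard_prod _ _ (finite_slice hA p.1) (finite_slice hB p.2)]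
      rintro ⟨a, b⟩ ⟨⟨ha, _⟩, hb, _⟩ ⟨a', b'⟩ ⟨⟨ha', _⟩, hb', _⟩ heq
      have := huniq a ha b hb a' ha' b' hb' heq
      simp [Prod.ext_iff, this.1, this.2]
    · intro p _
      exact ((finite_slice hA p.1).prod (finite_slice hB p.2)).image _
    · intro p hp q hq hpq
      rw [Set.disjoint_left]
      rintro l ⟨⟨a, b⟩, ⟨⟨ha, hha⟩, hb, hhb⟩, rfl⟩ ⟨⟨a', b'⟩, ⟨⟨ha', hha'⟩, hb', hhb'⟩, heq⟩
      obtain ⟨rfl, rfl⟩ := huniq a' ha' b' hb' a ha b hb heq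
      apply hpq
      have h1 : p.1 = q.1 := by omega
      have h2 : p.2 = q.2 := by omega
      exact Prod.ext h1 h2
  ext n
  rw [coeff_mul]
  simp only [gfS, coeff_mk, key n]
  push_cast
  rfl

/-! ## Walk sets and decompositions -/

def Wk (w : ℕ) (i j : ℤ) : Set (List Step) := {l | IsWalk bballSteps w i j l}

lemma Wk_good {w : ℕ} {i j : ℤ} : Wk w i j ⊆ Good := fun _ hl => hl.1

lemma Wk_iff {w : ℕ} {i j : ℤ} {l : List Step} :
    l ∈ Wk w i j ↔ ((∀ st ∈ l, st ∈ bballSteps) ∧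
      (∀ n, n ≤ l.length → 0 ≤ i + vsum (l.take n) ∧ i + vsum (l.take n) ≤ (w : ℤ)) ∧
      i + vsum l = j) := by
  constructor
  · rintro ⟨h1, h2, h3⟩
    exact ⟨h1, fun n hn => h2 _ (mem_heights.2 ⟨n, hn, rfl⟩), h3⟩
  · rintro ⟨h1, h2, h3⟩
    refine ⟨h1, fun h hh => ?_, h3⟩
    obtain ⟨n, hn, rfl⟩ := mem_heights.1 hh
    exact h2 n hn

lemma step_cases {st : Step} (h : st ∈ bballSteps) :
    st = (1, 1) ∨ st = (1, -1) ∨ st = (2, 2) ∨ st = (2, -2) := by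
  simpa [bballSteps] using h

lemma take_append_self (a b : List Step) : (a ++ b).take a.length = a := by
  rw [take_append_le le_rfl, List.take_length]

/-- `Tset w` : walks `0 → 1` of width `w` that visit `0` only at the start. -/
def Tset (w : ℕ) : Set (List Step) :=
  {l | l ∈ Wk w 0 1 ∧ ∀ n, 1 ≤ n → n ≤ l.length → vsum (l.take n) ≠ 0}

/-- `Uset w i` : walks `i → 0` of width `w` that visit `0` only at the end. -/
def Uset (w : ℕ) (i : ℤ) : Set (List Step) :=
  {l | l ∈ Wk w i 0 ∧ ∀ n, n < l.length → i + vsum (l.take n) ≠ 0}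

/-- `Iset w` : nonempty walks `0 → 0` of width `w` that visit `0` only at the endpoints. -/
def Iset (w : ℕ) : Set (List Step) :=
  {l | l ∈ Wk w 0 0 ∧ l ≠ [] ∧ ∀ n, 1 ≤ n → n < l.length → vsum (l.take n) ≠ 0}

lemma Tset_good {w : ℕ} : Tset w ⊆ Good := fun _ hl => hl.1.1
lemma Uset_good {w : ℕ} {i : ℤ} : Uset w i ⊆ Good := fun _ hl => hl.1.1
lemma Iset_good {w : ℕ} : Iset w ⊆ Good := fun _ hl => hl.1.1

/-! ### Uniqueness of the splittings -/

lemma uniqI (w : ℕ) : ∀ a ∈ Iset w, ∀ b ∈ Wk w 0 0, ∀ a' ∈ Iset w, ∀ b' ∈ Wk w 0 0,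
    a ++ b = a' ++ b' → a = a' ∧ b = b' := by
  have key : ∀ a ∈ Iset w, ∀ a' ∈ Iset w, ∀ b b' : List Step,
      a ++ b = a' ++ b' → a.length < a'.length → False := by
    intro a ha a' ha' b b' heq hlt
    have hend : (0 : ℤ) + vsum a = 0 := (Wk_iff.1 ha.1).2.2
    have htake : a'.take a.length = a := by
      have h1 : (a' ++ b').take a.length = a := by
        rw [← heq, take_append_self]
      rwa [take_append_le hlt.le] at h1
    refine ha'.2.2 a.length (List.length_pos_iff.2 ha.2.1) hlt ?_
    rw [htake]; omega
  intro a ha b hb a' ha' b' hb' heq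
  rcases lt_trichotomy a.length a'.length with h | h | h
  · exact absurd (key a ha a' ha' b b' heq h) (fun c => c)
  · exact List.append_inj heq h
  · exact absurd (key a' ha' a ha b' b heq.symm h) (fun c => c)

lemma uniqU (w : ℕ) (i : ℤ) {B B' : Set (List Step)} :
    ∀ a ∈ Uset w i, ∀ b ∈ B, ∀ a' ∈ Uset w i, ∀ b' ∈ B',
    a ++ b = a' ++ b' → a = a' ∧ b = b' := by
  have key : ∀ a ∈ Uset w i, ∀ a' ∈ Uset w i, ∀ b b' : List Step,
      a ++ b = a' ++ b' → a.length < a'.length → False := by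
    intro a ha a' ha' b b' heq hlt
    have hend : i + vsum a = 0 := (Wk_iff.1 ha.1).2.2
    have htake : a'.take a.length = a := by
      have h1 : (a' ++ b').take a.length = a := by
        rw [← heq, take_append_self]
      rwa [take_append_le hlt.le] at h1
    refine ha'.2 a.length hlt ?_
    rw [htake]; omega
  intro a ha b hb a' ha' b' hb' heq
  rcases lt_trichotomy a.length a'.length with h | h | h
  · exact absurd (key a ha a' ha' b b' heq h) (fun c => c)
  · exact List.append_inj heq h
  · exact absurd (key a' ha' a ha b' b heq.symm h) (fun c => c)

lemma uniqT (w : ℕ) : ∀ a ∈ Wk w 0 0, ∀ b ∈ Tset w, ∀ a' ∈ Wk w 0 0, ∀ b' ∈ Tset w,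
    a ++ b = a' ++ b' → a = a' ∧ b = b' := by
  have key : ∀ a ∈ Wk w 0 0, ∀ a' ∈ Wk w 0 0, ∀ b ∈ Tset w, ∀ b' ∈ Tset w,
      a ++ b = a' ++ b' → a.length < a'.length → False := by
    intro a ha a' ha' b hb b' hb' heq hlt
    have hend : (0 : ℤ) + vsum a = 0 := (Wk_iff.1 ha).2.2
    have hend' : (0 : ℤ) + vsum a' = 0 := (Wk_iff.1 ha').2.2
    set n := a'.length - a.length with hn
    have hlb : a'.length ≤ a.length + b.length := by
      have := congrArg List.length heq
      simp only [List.length_append] at this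
      omega
    have htake : (a ++ b).take a'.length = a ++ b.take n := by
      rw [take_append_ge hlt.le, hn]
    have htake2 : (a ++ b).take a'.length = a' := by rw [heq, take_append_self]
    have hv : vsum (b.take n) = 0 := by
      have := htake ▸ htake2
      have hv2 := congrArg vsum this
      rw [vsum_append] at hv2
      omega
    exact hb.2 n (by omega) (by omega) hv
  intro a ha b hb a' ha' b' hb' heq
  rcases lt_trichotomy a.length a'.length with h | h | h
  · exact absurd (key a ha a' ha' b hb b' hb' heq h) (fun c => c)
  · exact List.append_inj heq h
  · exact absurd (key a' ha' a ha b' hb' b hb heq.symm h) (fun c => c)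

/-! ### Splitting identities -/

lemma vsum_take_split {l : List Step} {k : ℕ} (hk : k ≤ l.length) (n : ℕ) :
    vsum (l.take (k + n)) = vsum (l.take k) + vsum ((l.drop k).take n) := by
  conv_lhs => rw [← List.take_append_drop k l]
  rw [take_append_ge (by simp), vsum_append, List.length_take, min_eq_left hk]
  simp

lemma isWalk_take_drop {w : ℕ} {i j : ℤ} {l : List Step} (hl : l ∈ Wk w i j) (k : ℕ) :
    IsWalk bballSteps w i (i + vsum (l.take k)) (l.take k) ∧
      IsWalk bballSteps w (i + vsum (l.take k)) j (l.drop k) := by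
  have hsplit : IsWalk bballSteps w i j (l.take k ++ l.drop k) := by
    rw [List.take_append_drop]; exact hl
  exact isWalk_append.1 hsplit

/-- First-return decomposition of `0 → 0` walks. -/
lemma split_F (w : ℕ) : Wk w 0 0 =
    {([] : List Step)} ∪ {l | ∃ a ∈ Iset w, ∃ b ∈ Wk w 0 0, a ++ b = l} := by
  ext l
  simp only [Set.mem_union, Set.mem_singleton_iff, Set.mem_setOf_eq]
  constructor
  · intro hl
    rcases eq_or_ne l [] with rfl | hne
    · exact Or.inl rfl
    right
    classical
    have hlpos : 1 ≤ l.length := List.length_pos_iff.2 hne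
    have hend : (0 : ℤ) + vsum l = 0 := (Wk_iff.1 hl).2.2
    have hex : ∃ n, 1 ≤ n ∧ n ≤ l.length ∧ vsum (l.take n) = 0 :=
      ⟨l.length, hlpos, le_rfl, by rw [List.take_length]; omega⟩
    set k := Nat.find hex with hkdef
    obtain ⟨hk1, hk2, hk3⟩ := Nat.find_spec hex
    have hmin : ∀ m, m < k → ¬(1 ≤ m ∧ m ≤ l.length ∧ vsum (l.take m) = 0) :=
      fun m hm => Nat.find_min hex hm
    have hsplit := isWalk_take_drop hl k
    rw [hk3] at hsplit
    refine ⟨l.take k, ⟨hsplit.1, ?_, ?_⟩, l.drop k, hsplit.2, List.take_append_drop k l⟩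
    · intro hc
      have := congrArg List.length hc
      simp only [List.length_take, List.length_nil] at this
      omega
    · intro n hn1 hn2
      have hlen : (l.take k).length = k := by simp; omega
      rw [hlen] at hn2
      rw [List.take_take, min_eq_left hn2.le]
      intro hc
      exact hmin n hn2 ⟨hn1, by omega, hc⟩
  · rintro (rfl | ⟨a, ha, b, hb, rfl⟩)
    · exact Wk_iff.2 ⟨by simp, fun n hn => by simp at hn; simp [hn], by simp⟩
    · have hva : (0 : ℤ) + vsum a = 0 := (Wk_iff.1 ha.1).2.2
      refine isWalk_append.2 ⟨?_, ?_⟩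
      · rw [show (0 : ℤ) + vsum a = 0 from hva]; exact ha.1
      · rw [show (0 : ℤ) + vsum a = 0 from hva]; exact hb

/-- Last-zero decomposition of `0 → 1` walks. -/
lemma split_G (w : ℕ) : Wk w 0 1 =
    {l | ∃ a ∈ Wk w 0 0, ∃ b ∈ Tset w, a ++ b = l} := by
  ext l
  simp only [Set.mem_setOf_eq]
  constructor
  · intro hl
    classical
    set P : ℕ → Prop := fun n => n ≤ l.length ∧ vsum (l.take n) = 0 with hP
    set k := Nat.findGreatest P l.length with hkdef
    have hk : P k := Nat.findGreatest_spec (Nat.zero_le _) ⟨Nat.zero_le _, by simp⟩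
    have hmax : ∀ m, P m → m ≤ k := fun m hm => Nat.le_findGreatest hm.1 hm
    obtain ⟨hk2, hk3⟩ := hk
    have hsplit := isWalk_take_drop hl k
    rw [hk3] at hsplit
    refine ⟨l.take k, ?_, l.drop k, ⟨hsplit.2, ?_⟩, List.take_append_drop k l⟩
    · simpa [Wk] using hsplit.1
    · intro n hn1 hn2
      intro hc
      have hdl : (l.drop k).length = l.length - k := by simp
      have hkn : k + n ≤ l.length := by omega
      have : vsum (l.take (k + n)) = 0 := by
        rw [vsum_take_split hk2 n, hk3, hc]; ring
      have := hmax (k + n) ⟨hkn, this⟩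
      omega
  · rintro ⟨a, ha, b, hb, rfl⟩
    have hva : (0 : ℤ) + vsum a = 0 := (Wk_iff.1 ha).2.2
    refine isWalk_append.2 ⟨?_, ?_⟩
    · rw [show (0 : ℤ) + vsum a = 0 from hva]; exact ha
    · rw [show (0 : ℤ) + vsum a = 0 from hva]; exact hb.1

/-- First-zero decomposition of `1 → 0` walks. -/
lemma split_H (w : ℕ) : Wk w 1 0 =
    {l | ∃ a ∈ Uset w 1, ∃ b ∈ Wk w 0 0, a ++ b = l} := by
  ext l
  simp only [Set.mem_setOf_eq]
  constructor
  · intro hl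
    classical
    have hend : (1 : ℤ) + vsum l = 0 := (Wk_iff.1 hl).2.2
    have hex : ∃ n, n ≤ l.length ∧ (1 : ℤ) + vsum (l.take n) = 0 :=
      ⟨l.length, le_rfl, by rw [List.take_length]; omega⟩
    set k := Nat.find hex with hkdef
    obtain ⟨hk2, hk3⟩ := Nat.find_spec hex
    have hmin : ∀ m, m < k → ¬(m ≤ l.length ∧ (1 : ℤ) + vsum (l.take m) = 0) :=
      fun m hm => Nat.find_min hex hm
    have hsplit := isWalk_take_drop hl k
    rw [show (1 : ℤ) + vsum (l.take k) = 0 from hk3] at hsplit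
    refine ⟨l.take k, ⟨hsplit.1, ?_⟩, l.drop k, hsplit.2, List.take_append_drop k l⟩
    intro n hn
    have hlen : (l.take k).length = k := by simp; omega
    rw [hlen] at hn
    rw [List.take_take, min_eq_left hn.le]
    intro hc
    exact hmin n hn ⟨by omega, hc⟩
  · rintro ⟨a, ha, b, hb, rfl⟩
    have hva : (1 : ℤ) + vsum a = 0 := (Wk_iff.1 ha.1).2.2
    refine isWalk_append.2 ⟨?_, ?_⟩
    · rw [show (1 : ℤ) + vsum a = 0 from hva]; exact ha.1
    · rw [show (1 : ℤ) + vsum a = 0 from hva]; exact hb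

/-- Decomposition of `1 → 1` walks by whether they touch `0`. -/
lemma split_J (w : ℕ) (hw : 1 ≤ w) : Wk w 1 1 =
    Wk (w - 1) 0 0 ∪ {l | ∃ a ∈ Uset w 1, ∃ b ∈ Wk w 0 1, a ++ b = l} := by
  have hcast : ((w - 1 : ℕ) : ℤ) = (w : ℤ) - 1 := by omega
  ext l
  simp only [Set.mem_union, Set.mem_setOf_eq]
  constructor
  · intro hl
    classical
    by_cases hex : ∃ n, n ≤ l.length ∧ (1 : ℤ) + vsum (l.take n) = 0
    · right
      set k := Nat.find hex with hkdef
      obtain ⟨hk2, hk3⟩ := Nat.find_spec hex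
      have hmin : ∀ m, m < k → ¬(m ≤ l.length ∧ (1 : ℤ) + vsum (l.take m) = 0) :=
        fun m hm => Nat.find_min hex hm
      have hsplit := isWalk_take_drop hl k
      rw [show (1 : ℤ) + vsum (l.take k) = 0 from hk3] at hsplit
      refine ⟨l.take k, ⟨hsplit.1, ?_⟩, l.drop k, hsplit.2, List.take_append_drop k l⟩
      intro n hn
      have hlen : (l.take k).length = k := by simp; omega
      rw [hlen] at hn
      rw [List.take_take, min_eq_left hn.le]
      intro hc
      exact hmin n hn ⟨by omega, hc⟩
    · left
      push_neg at hex
      obtain ⟨h1, h2, h3⟩ := Wk_iff.1 hl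
      refine Wk_iff.2 ⟨h1, fun n hn => ?_, by omega⟩
      have hb := h2 n hn
      have hne := hex n hn
      rw [hcast]
      omega
  · rintro (hl | ⟨a, ha, b, hb, rfl⟩)
    · obtain ⟨h1, h2, h3⟩ := Wk_iff.1 hl
      refine Wk_iff.2 ⟨h1, fun n hn => ?_, by omega⟩
      have hb := h2 n hn
      rw [hcast] at hb
      omega
    · have hva : (1 : ℤ) + vsum a = 0 := (Wk_iff.1 ha.1).2.2
      refine isWalk_append.2 ⟨?_, ?_⟩
      · rw [show (1 : ℤ) + vsum a = 0 from hva]; exact ha.1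
      · rw [show (1 : ℤ) + vsum a = 0 from hva]; exact hb

/-! ### First/last step decompositions -/

lemma mem_bball_up1 : ((1:ℤ),(1:ℤ)) ∈ bballSteps := by simp [bballSteps]
lemma mem_bball_dn1 : ((1:ℤ),(-1:ℤ)) ∈ bballSteps := by simp [bballSteps]
lemma mem_bball_up2 : ((2:ℤ),(2:ℤ)) ∈ bballSteps := by simp [bballSteps]
lemma mem_bball_dn2 : ((2:ℤ),(-2:ℤ)) ∈ bballSteps := by simp [bballSteps]

lemma take_succ_cons' (s : Step) (t : List Step) (n : ℕ) :
    (s :: t).take (n + 1) = s :: t.take n := rfl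

/-- Peeling the first step off an irreducible `0 → 0` walk. -/
lemma split_I (w : ℕ) : Iset w =
    ((fun l => ((1:ℤ),(1:ℤ)) :: l) '' Uset w 1) ∪
      ((fun l => ((2:ℤ),(2:ℤ)) :: l) '' Uset w 2) := by
  ext l
  simp only [Set.mem_union, Set.mem_image]
  constructor
  · rintro ⟨hl, hne, hint⟩
    obtain ⟨s, t, rfl⟩ := List.exists_cons_of_ne_nil hne
    obtain ⟨h1, h2, h3⟩ := Wk_iff.1 hl
    have hs := h1 s List.mem_cons_self
    have hb1 := h2 1 (by simp)
    rw [take_succ_cons', List.take_zero] at hb1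
    simp only [vsum_cons, vsum_nil, add_zero] at hb1
    have ht : ∀ i : ℤ, s.2 = i → t ∈ Uset w i := by
      intro i hi
      subst hi
      refine ⟨Wk_iff.2 ⟨fun st hst => h1 st (List.mem_cons_of_mem s hst),
        fun n hn => ?_, ?_⟩, ?_⟩
      · have := h2 (n + 1) (by simp; omega)
        rw [take_succ_cons'] at this
        simp only [vsum_cons] at this
        constructor <;> omega
      · simp only [vsum_cons] at h3
        omega
      · intro n hn
        have := hint (n + 1) (by omega) (by simp; omega)
        rw [take_succ_cons'] at this
        simp only [vsum_cons] at this
        intro hc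
        exact this (by omega)
    rcases step_cases hs with rfl | rfl | rfl | rfl
    · exact Or.inl ⟨t, ht 1 rfl, rfl⟩
    · exact absurd hb1 (by norm_num)
    · exact Or.inr ⟨t, ht 2 rfl, rfl⟩
    · exact absurd hb1 (by norm_num)
  · have gen : ∀ (c : Step), c ∈ bballSteps → (1 ≤ c.2) →
        ∀ t ∈ Uset w c.2, (c :: t) ∈ Iset w := by
      intro c hc hc2 t ht
      obtain ⟨hw1, hw2, hw3⟩ := Wk_iff.1 ht.1
      refine ⟨Wk_iff.2 ⟨?_, ?_, ?_⟩, by simp, ?_⟩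
      · intro st hst
        rcases List.mem_cons.1 hst with rfl | hst
        · exact hc
        · exact hw1 st hst
      · intro n hn
        cases n with
        | zero =>
          simp only [List.take_zero, vsum_nil, add_zero]
          omega
        | succ m =>
          have := hw2 m (by simpa using hn)
          rw [take_succ_cons']
          simp only [vsum_cons]
          omega
      · simp only [vsum_cons]
        omega
      · intro n h1n hnl
        cases n with
        | zero => omega
        | succ m =>
          have := ht.2 m (by simpa using hnl)
          rw [take_succ_cons']
          simp only [vsum_cons]
          intro hcon
          exact this (by omega)
    rintro (⟨t, ht, rfl⟩ | ⟨t, ht, rfl⟩)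
    · exact gen _ mem_bball_up1 (by norm_num) t ht
    · exact gen _ mem_bball_up2 (by norm_num) t ht

/-- Peeling the first step off a `0 → 1` walk avoiding `0` after the start. -/
lemma split_T (w : ℕ) (hw : 1 ≤ w) : Tset w =
    ((fun l => ((1:ℤ),(1:ℤ)) :: l) '' Wk (w - 1) 0 0) ∪
      ((fun l => ((2:ℤ),(2:ℤ)) :: l) '' Wk (w - 1) 1 0) := by
  have hcast : ((w - 1 : ℕ) : ℤ) = (w : ℤ) - 1 := by omega
  ext l
  simp only [Set.mem_union, Set.mem_image]
  constructor
  · rintro ⟨hl, hint⟩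
    obtain ⟨h1, h2, h3⟩ := Wk_iff.1 hl
    have hne : l ≠ [] := by
      rintro rfl
      simp at h3
    obtain ⟨s, t, rfl⟩ := List.exists_cons_of_ne_nil hne
    have hs := h1 s List.mem_cons_self
    have hb1 := h2 1 (by simp)
    rw [take_succ_cons', List.take_zero] at hb1
    simp only [vsum_cons, vsum_nil, add_zero] at hb1
    have ht : ∀ i : ℤ, s.2 = i → t ∈ Wk (w - 1) (i - 1) 0 := by
      intro i hi
      subst hi
      refine Wk_iff.2 ⟨fun st hst => h1 st (List.mem_cons_of_mem s hst),
        fun n hn => ?_, ?_⟩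
      · have hbd := h2 (n + 1) (by simp; omega)
        have hnz := hint (n + 1) (by omega) (by simp; omega)
        rw [take_succ_cons'] at hbd hnz
        simp only [vsum_cons] at hbd hnz
        rw [hcast]
        constructor <;> omega
      · simp only [vsum_cons] at h3
        omega
    rcases step_cases hs with rfl | rfl | rfl | rfl
    · exact Or.inl ⟨t, by simpa using ht 1 rfl, rfl⟩
    · exact absurd hb1 (by norm_num)
    · exact Or.inr ⟨t, by simpa using ht 2 rfl, rfl⟩
    · exact absurd hb1 (by norm_num)
  · have gen : ∀ (c : Step), c ∈ bballSteps → (1 ≤ c.2) →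
        ∀ t ∈ Wk (w - 1) (c.2 - 1) 0, (c :: t) ∈ Tset w := by
      intro c hc hc2 t ht
      obtain ⟨hw1, hw2, hw3⟩ := Wk_iff.1 ht
      rw [hcast] at hw2
      refine ⟨Wk_iff.2 ⟨?_, ?_, ?_⟩, ?_⟩
      · intro st hst
        rcases List.mem_cons.1 hst with rfl | hst
        · exact hc
        · exact hw1 st hst
      · intro n hn
        cases n with
        | zero =>
          simp only [List.take_zero, vsum_nil, add_zero]
          omega
        | succ m =>
          have := hw2 m (by simpa using hn)
          rw [take_succ_cons']
          simp only [vsum_cons]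
          omega
      · simp only [vsum_cons]
        omega
      · intro n h1n hnl
        cases n with
        | zero => omega
        | succ m =>
          have := hw2 m (by simpa using hnl)
          rw [take_succ_cons']
          simp only [vsum_cons]
          omega
    rintro (⟨t, ht, rfl⟩ | ⟨t, ht, rfl⟩)
    · exact gen _ mem_bball_up1 (by norm_num) t (by simpa using ht)
    · exact gen _ mem_bball_up2 (by norm_num) t (by simpa using ht)

/-- Peeling the last step off a walk `i → 0` hitting `0` only at the end. -/
lemma split_U (w : ℕ) (hw : 1 ≤ w) (i : ℤ) (hi : 1 ≤ i) : Uset w i =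
    ((fun l => l ++ [((1:ℤ),(-1:ℤ))]) '' Wk (w - 1) (i - 1) 0) ∪
      ((fun l => l ++ [((2:ℤ),(-2:ℤ))]) '' Wk (w - 1) (i - 1) 1) := by
  have hcast : ((w - 1 : ℕ) : ℤ) = (w : ℤ) - 1 := by omega
  ext l
  simp only [Set.mem_union, Set.mem_image]
  constructor
  · rintro ⟨hl, hnz⟩
    obtain ⟨h1, h2, h3⟩ := Wk_iff.1 hl
    have hne : l ≠ [] := by
      rintro rfl
      simp at h3
      omega
    obtain ⟨r, s, hcat⟩ := (List.eq_nil_or_concat l).resolve_left hne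
    rw [List.concat_eq_append] at hcat
    subst hcat
    have hs : s ∈ bballSteps := h1 s (by simp)
    have hlast : i + vsum r + s.2 = 0 := by
      simp only [vsum_append, vsum_cons, vsum_nil] at h3
      omega
    have hbr := h2 r.length (by simp)
    rw [take_append_self] at hbr
    have hnzr : i + vsum r ≠ 0 := by
      have := hnz r.length (by simp)
      rwa [take_append_self] at this
    have hr : ∀ d : ℤ, s.2 = -d → r ∈ Wk (w - 1) (i - 1) (d - 1) := by
      intro d hd
      refine Wk_iff.2 ⟨fun st hst => h1 st (by simp [hst]), fun n hn => ?_, ?_⟩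
      · have hbd := h2 n (by simp; omega)
        have hnzn := hnz n (by simp; omega)
        rw [take_append_le hn] at hbd hnzn
        rw [hcast]
        constructor <;> omega
      · omega
    rcases step_cases hs with rfl | rfl | rfl | rfl
    · exact absurd hlast (by norm_num; omega)
    · left
      refine ⟨r, ?_, rfl⟩
      have := hr 1 rfl
      simpa using this
    · exact absurd hlast (by norm_num; omega)
    · right
      refine ⟨r, ?_, rfl⟩
      have := hr 2 rfl
      simpa using this
  · have gen : ∀ (c : Step), c ∈ bballSteps → c.2 ≤ -1 →
        ∀ r ∈ Wk (w - 1) (i - 1) (-c.2 - 1), (r ++ [c]) ∈ Uset w i := by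
      intro c hc hc2 r hr
      obtain ⟨hw1, hw2, hw3⟩ := Wk_iff.1 hr
      rw [hcast] at hw2
      have hlen : (r ++ [c]).length = r.length + 1 := by simp
      refine ⟨Wk_iff.2 ⟨?_, ?_, ?_⟩, ?_⟩
      · intro st hst
        rcases List.mem_append.1 hst with hst | hst
        · exact hw1 st hst
        · simp at hst
          subst hst
          exact hc
      · intro n hn
        rw [hlen] at hn
        rcases Nat.lt_or_ge n (r.length + 1) with hlt | hge
        · rcases Nat.lt_succ_iff.1 hlt with hle
          have := hw2 n (by omega)
          rw [take_append_le hle]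
          omega
        · have hn' : n = r.length + 1 := by omega
          subst hn'
          rw [take_append_ge (by omega)]
          have h0 : (r ++ [c].take (r.length + 1 - r.length)) = r ++ [c] := by
            congr 1
            simp
          rw [h0]
          simp only [vsum_append, vsum_cons, vsum_nil]
          omega
      · simp only [vsum_append, vsum_cons, vsum_nil]
        omega
      · intro n hn
        rw [hlen] at hn
        have hle : n ≤ r.length := by omega
        have := hw2 n (by omega)
        rw [take_append_le hle]
        omega
    rintro (⟨r, hr, rfl⟩ | ⟨r, hr, rfl⟩)
    · exact gen _ mem_bball_dn1 (by norm_num) r (by simpa using hr)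
    · exact gen _ mem_bball_dn2 (by norm_num) r (by simpa using hr)

/-! ### Generating function consequences -/

lemma nil_good : ({([] : List Step)} : Set (List Step)) ⊆ Good := by
  rintro l hl
  rw [Set.mem_singleton_iff] at hl
  subst hl
  intro st hst
  simp at hst

lemma concat_good {A B : Set (List Step)} (hA : A ⊆ Good) (hB : B ⊆ Good) :
    {l | ∃ a ∈ A, ∃ b ∈ B, a ++ b = l} ⊆ Good := by
  rintro l ⟨a, ha, b, hb, rfl⟩ st hst
  rcases List.mem_append.1 hst with h | h
  · exact hA ha st h
  · exact hB hb st h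

lemma cons_image_good {c : Step} (hc : c ∈ bballSteps) {A : Set (List Step)} (hA : A ⊆ Good) :
    ((fun l => c :: l) '' A) ⊆ Good := by
  rintro l ⟨a, ha, rfl⟩ st hst
  rcases List.mem_cons.1 hst with rfl | h
  · exact hc
  · exact hA ha st h

lemma snoc_image_good {c : Step} (hc : c ∈ bballSteps) {A : Set (List Step)} (hA : A ⊆ Good) :
    ((fun l => l ++ [c]) '' A) ⊆ Good := by
  rintro l ⟨a, ha, rfl⟩ st hst
  rcases List.mem_append.1 hst with h | h
  · exact hA ha st h
  · simp at h
    subst h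
    exact hc

lemma gfS_cons {c : Step} (hc : c ∈ bballSteps) {A : Set (List Step)} (hA : A ⊆ Good)
    {k : ℕ} (hk : c.1 = (k : ℤ)) :
    gfS ((fun l => c :: l) '' A) = (X : PowerSeries ℚ) ^ k * gfS A := by
  have hsing : ({[c]} : Set (List Step)) ⊆ Good := by
    rintro l hl
    rw [Set.mem_singleton_iff] at hl
    subst hl
    intro st hst
    simp at hst
    subst hst
    exact hc
  have hset : ((fun l => c :: l) '' A) =
      {l | ∃ a ∈ ({[c]} : Set (List Step)), ∃ b ∈ A, a ++ b = l} := by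
    ext l
    simp [Set.mem_image]
  rw [hset, gfS_mul hsing hA ?_, gfS_single hk]
  rintro a ha b hb a' ha' b' hb' heq
  rw [Set.mem_singleton_iff] at ha ha'
  subst ha; subst ha'
  simp only [List.cons_append, List.nil_append, List.cons.injEq, true_and] at heq
  exact ⟨rfl, heq⟩

lemma gfS_snoc {c : Step} (hc : c ∈ bballSteps) {A : Set (List Step)} (hA : A ⊆ Good)
    {k : ℕ} (hk : c.1 = (k : ℤ)) :
    gfS ((fun l => l ++ [c]) '' A) = gfS A * (X : PowerSeries ℚ) ^ k := by
  have hsing : ({[c]} : Set (List Step)) ⊆ Good := by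
    rintro l hl
    rw [Set.mem_singleton_iff] at hl
    subst hl
    intro st hst
    simp at hst
    subst hst
    exact hc
  have hset : ((fun l => l ++ [c]) '' A) =
      {l | ∃ a ∈ A, ∃ b ∈ ({[c]} : Set (List Step)), a ++ b = l} := by
    ext l
    simp [Set.mem_image]
  rw [hset, gfS_mul hA hsing ?_, gfS_single hk]
  rintro a ha b hb a' ha' b' hb' heq
  rw [Set.mem_singleton_iff] at hb hb'
  subst hb; subst hb'
  exact List.append_inj' heq rfl

lemma disj_cons {c c' : Step} (h : c ≠ c') (A B : Set (List Step)) :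
    Disjoint ((fun l => c :: l) '' A) ((fun l => c' :: l) '' B) := by
  rw [Set.disjoint_left]
  rintro l ⟨a, _, rfl⟩ ⟨b, _, hb⟩
  simp only [List.cons.injEq] at hb
  exact h hb.1.symm

lemma disj_snoc {c c' : Step} (h : c ≠ c') (A B : Set (List Step)) :
    Disjoint ((fun l => l ++ [c]) '' A) ((fun l => l ++ [c']) '' B) := by
  rw [Set.disjoint_left]
  rintro l ⟨a, _, rfl⟩ ⟨b, _, hb⟩
  have := (List.append_inj' hb rfl).2
  simp only [List.cons.injEq] at this
  exact h (by simpa using this.1.symm)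

lemma disj_nil_concat (w : ℕ) {B : Set (List Step)} :
    Disjoint ({([] : List Step)} : Set (List Step)) {l | ∃ a ∈ Iset w, ∃ b ∈ B, a ++ b = l} := by
  rw [Set.disjoint_left]
  rintro l hl ⟨a, ha, b, hb, heq⟩
  rw [Set.mem_singleton_iff] at hl
  subst hl
  obtain ⟨h1, -⟩ := List.append_eq_nil_iff.1 heq
  exact ha.2.1 h1

lemma disj_J (w : ℕ) (hw : 1 ≤ w) :
    Disjoint (Wk (w - 1) 0 0) {l | ∃ a ∈ Uset w 1, ∃ b ∈ Wk w 0 1, a ++ b = l} := by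
  have hcast : ((w - 1 : ℕ) : ℤ) = (w : ℤ) - 1 := by omega
  rw [Set.disjoint_left]
  rintro l hl ⟨a, ha, b, hb, rfl⟩
  have hva : (1 : ℤ) + vsum a = 0 := (Wk_iff.1 ha.1).2.2
  have hbd := (Wk_iff.1 hl).2.1 a.length (by simp)
  rw [take_append_self] at hbd
  omega

theorem main (w : ℕ) (hw : 1 ≤ w) :
    gfS (Wk w 0 0) = 1 + gfS (Wk w 0 0) *
        ((X : PowerSeries ℚ) ^ 2 * gfS (Wk (w - 1) 0 0) + X ^ 3 * gfS (Wk (w - 1) 0 1)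
          + X ^ 3 * gfS (Wk (w - 1) 1 0) + X ^ 4 * gfS (Wk (w - 1) 1 1))
    ∧ gfS (Wk w 0 1) = gfS (Wk w 0 0) *
        (X * gfS (Wk (w - 1) 0 0) + X ^ 2 * gfS (Wk (w - 1) 1 0))
    ∧ gfS (Wk w 1 0) = gfS (Wk w 0 0) *
        (X * gfS (Wk (w - 1) 0 0) + X ^ 2 * gfS (Wk (w - 1) 0 1))
    ∧ gfS (Wk w 1 1) = gfS (Wk (w - 1) 0 0) + gfS (Wk w 0 1) *
        (X * gfS (Wk (w - 1) 0 0) + X ^ 2 * gfS (Wk (w - 1) 0 1)) := by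
  have hne12 : ((1:ℤ),(1:ℤ)) ≠ ((2:ℤ),(2:ℤ)) := by decide
  have hne12' : ((1:ℤ),(-1:ℤ)) ≠ ((2:ℤ),(-2:ℤ)) := by decide
  -- U1 : Uset w 1
  have hU1set := split_U w hw 1 le_rfl
  rw [show (1:ℤ) - 1 = 0 by norm_num] at hU1set
  have hU2set := split_U w hw 2 (by norm_num)
  rw [show (2:ℤ) - 1 = 1 by norm_num] at hU2set
  have eU1 : gfS (Uset w 1) = gfS (Wk (w-1) 0 0) * X ^ 1 + gfS (Wk (w-1) 0 1) * X ^ 2 := by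
    rw [hU1set, gfS_union (snoc_image_good mem_bball_dn1 Wk_good)
        (snoc_image_good mem_bball_dn2 Wk_good) (disj_snoc hne12' _ _),
      gfS_snoc mem_bball_dn1 Wk_good (k := 1) (by norm_num),
      gfS_snoc mem_bball_dn2 Wk_good (k := 2) (by norm_num)]
  have eU2 : gfS (Uset w 2) = gfS (Wk (w-1) 1 0) * X ^ 1 + gfS (Wk (w-1) 1 1) * X ^ 2 := by
    rw [hU2set, gfS_union (snoc_image_good mem_bball_dn1 Wk_good)
        (snoc_image_good mem_bball_dn2 Wk_good) (disj_snoc hne12' _ _),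
      gfS_snoc mem_bball_dn1 Wk_good (k := 1) (by norm_num),
      gfS_snoc mem_bball_dn2 Wk_good (k := 2) (by norm_num)]
  have eI : gfS (Iset w) = X ^ 1 * gfS (Uset w 1) + X ^ 2 * gfS (Uset w 2) := by
    rw [split_I w, gfS_union (cons_image_good mem_bball_up1 Uset_good)
        (cons_image_good mem_bball_up2 Uset_good) (disj_cons hne12 _ _),
      gfS_cons mem_bball_up1 Uset_good (k := 1) (by norm_num),
      gfS_cons mem_bball_up2 Uset_good (k := 2) (by norm_num)]
  have eT : gfS (Tset w) = X ^ 1 * gfS (Wk (w-1) 0 0) + X ^ 2 * gfS (Wk (w-1) 1 0) := by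
    rw [split_T w hw, gfS_union (cons_image_good mem_bball_up1 Wk_good)
        (cons_image_good mem_bball_up2 Wk_good) (disj_cons hne12 _ _),
      gfS_cons mem_bball_up1 Wk_good (k := 1) (by norm_num),
      gfS_cons mem_bball_up2 Wk_good (k := 2) (by norm_num)]
  have eF : gfS (Wk w 0 0) = 1 + gfS (Iset w) * gfS (Wk w 0 0) := by
    conv_lhs => rw [split_F w]
    rw [gfS_union nil_good (concat_good Iset_good Wk_good) (disj_nil_concat w),
      gfS_nil, gfS_mul Iset_good Wk_good (uniqI w)]
  have eG : gfS (Wk w 0 1) = gfS (Wk w 0 0) * gfS (Tset w) := by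
    conv_lhs => rw [split_G w]
    rw [gfS_mul Wk_good Tset_good (uniqT w)]
  have eH : gfS (Wk w 1 0) = gfS (Uset w 1) * gfS (Wk w 0 0) := by
    conv_lhs => rw [split_H w]
    rw [gfS_mul Uset_good Wk_good (uniqU w 1)]
  have eJ : gfS (Wk w 1 1) = gfS (Wk (w-1) 0 0) + gfS (Uset w 1) * gfS (Wk w 0 1) := by
    conv_lhs => rw [split_J w hw]
    rw [gfS_union Wk_good (concat_good Uset_good Wk_good) (disj_J w hw),
      gfS_mul Uset_good Wk_good (uniqU w 1)]
  refine ⟨?_, ?_, ?_, ?_⟩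
  · conv_lhs => rw [eF]
    rw [eI, eU1, eU2]
    ring
  · rw [eG, eT]
    ring
  · rw [eH, eU1]
    ring
  · rw [eJ, eG, eT, eU1]
    ring

end BBall

theorem bball_system : ∀ w : ℕ, 1 ≤ w →
    gf w 0 0 = 1 + gf w 0 0 * (PowerSeries.X ^ 2 * gf (w - 1) 0 0
        + PowerSeries.X ^ 3 * gf (w - 1) 0 1 + PowerSeries.X ^ 3 * gf (w - 1) 1 0
        + PowerSeries.X ^ 4 * gf (w - 1) 1 1)
    ∧ gf w 0 1 = gf w 0 0 * (PowerSeries.X * gf (w - 1) 0 0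
        + PowerSeries.X ^ 2 * gf (w - 1) 1 0)
    ∧ gf w 1 0 = gf w 0 0 * (PowerSeries.X * gf (w - 1) 0 0
        + PowerSeries.X ^ 2 * gf (w - 1) 0 1)
    ∧ gf w 1 1 = gf (w - 1) 0 0 + gf w 0 1 * (PowerSeries.X * gf (w - 1) 0 0
        + PowerSeries.X ^ 2 * gf (w - 1) 0 1) := by
  intro w hw
  have hgf : ∀ (v : ℕ) (i j : ℤ), gf v i j = BBall.gfS (BBall.Wk v i j) := fun _ _ _ => rfl
  have := BBall.main w hw
  simp only [hgf]
  exact this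
end
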